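/- arXiv:1406.6511 — 3 statements merged into one kernel-verified Lean document; each statement's English description precedes it below -/
import Mathlib

section
/- Let H ≤ GL(V) be the stabilizer of the flag V > U_1 > ... > U_{k-1} > 0 and let 0 < W < V be a subspace. Then U_{k-1} ⊇ W if and only if H contains the subgroup L = {X ∈ GL(V) : (X - I)V ⊆ W}. -/
/-! If `W ≤ U_{k-1}`, then `X - I` maps `V` into every nonzero `U_i`, so `X` and `X⁻¹` both map
`U_i` into itself. Conversely, if `w ∈ W` lies outside `U_{k-1}`, pick `0 ≠ u ∈ U_{k-1}` and a
linear form `f` with `f w = 0 ≠ f u`: the transvection `v ↦ v + f v • w` lies in `L` but sends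
`u` to `u + f u • w ∉ U_{k-1}`. -/

namespace Submodule

section Ring

variable {R M : Type*} [Ring R] [AddCommGroup M] [Module R M] {U : Submodule R M}

theorem map_le_self_of_sub_mem {f : M →ₗ[R] M} (hf : ∀ v, f v - v ∈ U) : U.map f ≤ U := by
  rintro _ ⟨v, hv, rfl⟩
  simpa using U.add_mem hv (hf v)

theorem map_eq_self_of_sub_mem {e : M ≃ₗ[R] M} (he : ∀ v, e v - v ∈ U) :
    U.map (e : M →ₗ[R] M) = U := by
  have he_symm (v : M) : e.symm v - v ∈ U := by
    simpa using U.neg_mem (he (e.symm v))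
  refine le_antisymm (map_le_self_of_sub_mem he) ?_
  rw [map_equiv_eq_comap_symm, ← map_le_iff_le_comap]
  exact map_le_self_of_sub_mem (f := e.symm.toLinearMap) he_symm

end Ring

variable {K V : Type*} [Field K] [AddCommGroup V] [Module K V]

theorem exists_linearEquiv_sub_mem_span_map_ne {U : Submodule K V} (hU : U ≠ ⊥) {w : V}
    (hw : w ∉ U) : ∃ e : V ≃ₗ[K] V, (∀ v, e v - v ∈ K ∙ w) ∧ U.map (e : V →ₗ[K] V) ≠ U := by
  obtain ⟨u, hu, hu0⟩ := exists_mem_ne_zero_of_ne_bot hU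
  have hu_span : u ∉ K ∙ w := by
    intro hu'
    obtain ⟨a, rfl⟩ := mem_span_singleton.mp hu'
    exact hw ((U.smul_mem_iff (left_ne_zero_of_smul hu0)).mp hu)
  obtain ⟨f, hfu, hfw⟩ := exists_dual_map_eq_bot_of_notMem hu_span inferInstance
  have hfw : f w = 0 := by
    simpa [hfw] using mem_map_of_mem (f := f) (mem_span_singleton_self w)
  refine ⟨LinearEquiv.transvection hfw, fun v => ?_, fun hmap => hw ?_⟩
  · simpa [LinearMap.transvection.apply] using smul_mem _ (f v) (mem_span_singleton_self w)
  · have hux : u + f u • w ∈ U := hmap ▸ mem_map_of_mem hu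
    exact (U.smul_mem_iff hfu).mp (by simpa using U.sub_mem hux hu)

theorem le_flag_iff_forall_map_eq {k : ℕ} {U : Fin (k + 1) → Submodule K V} (hanti : StrictAnti U)
    (hlast : U (Fin.last k) = ⊥) {j : Fin (k + 1)} (hj : (j : ℕ) + 1 = k) (W : Submodule K V) :
    W ≤ U j ↔ ∀ e : V ≃ₗ[K] V, (∀ v, e v - v ∈ W) → ∀ i, (U i).map (e : V →ₗ[K] V) = U i := by
  constructor
  · intro hWU e he i
    by_cases hi : i = Fin.last k
    · rw [hi, hlast, map_bot]
    · have hij : i ≤ j := by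
        rw [Fin.ext_iff, Fin.val_last] at hi
        rw [Fin.le_def]
        omega
      exact map_eq_self_of_sub_mem fun v => hanti.antitone hij (hWU (he v))
  · intro hstab
    by_contra hWU
    obtain ⟨w, hw, hwU⟩ := SetLike.not_le_iff_exists.mp hWU
    have hU : U j ≠ ⊥ := by
      have hj_lt : j < Fin.last k := by
        rw [Fin.lt_def, Fin.val_last]
        omega
      simpa [hlast] using (hanti hj_lt).ne'
    obtain ⟨e, he, hmap⟩ := exists_linearEquiv_sub_mem_span_map_ne hU hwU
    exact hmap (hstab e (fun v => (span_singleton_le_iff_mem w W).mpr hw (he v)) j)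

end Submodule

theorem Matrix.GeneralLinearGroup.forall_mulVecLin_iff {ι R : Type*} [Fintype ι] [DecidableEq ι]
    [CommRing R] {P : ((ι → R) →ₗ[R] ι → R) → Prop} :
    (∀ X : GL ι R, P (X : Matrix ι ι R).mulVecLin) ↔ ∀ e : (ι → R) ≃ₗ[R] ι → R, P e :=
  Equiv.forall_congr_right (q := fun e : (ι → R) ≃ₗ[R] ι → R => P e)
    (toLin.trans (LinearMap.GeneralLinearGroup.generalLinearEquiv R (ι → R))).toEquiv

/-- Let `H ≤ GL(V)` be the stabilizer of the flag
`V = U_0 > U_1 > ... > U_{k-1} > U_k = 0` and let `0 < W < V`. Then `W ⊆ U_{k-1}` iff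
every `X ∈ GL(V)` with `(X - I)V ⊆ W` stabilizes the flag (i.e. lies in `H`). -/
theorem stmt_8 (F : Type) [Field F] (n k : ℕ) (hk : 0 < k)
    (U : Fin (k + 1) → Submodule F (Fin n → F))
    (hanti : StrictAnti U) (hlast : U (Fin.last k) = ⊥)
    (W : Submodule F (Fin n → F)) :
    W ≤ U ⟨k - 1, by omega⟩ ↔
      ∀ X : GL (Fin n) F,
        (∀ v : Fin n → F, (X : Matrix (Fin n) (Fin n) F).mulVec v - v ∈ W) →
        ∀ i, (U i).map (Matrix.mulVecLin (X : Matrix (Fin n) (Fin n) F)) = U i := by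
  exact (Submodule.le_flag_iff_forall_map_eq hanti hlast (Nat.sub_add_cancel hk) W).trans
    (Matrix.GeneralLinearGroup.forall_mulVecLin_iff
      (P := fun f => (∀ v, f v - v ∈ W) → ∀ i, (U i).map f = U i)).symm
end

section
/- Let H ≤ GL(V) be the stabilizer of the flag V > U_1 > ... > U_{k-1} > 0 and let 0 < W < V. Then U_1 ⊆ W if and only if H contains the subgroup {X ∈ GL(V) : (X - I)W = 0}. -/
/-!
If `U₁ ≤ W`, a map fixing `W` pointwise is the identity on every `Uᵢ` with `i ≥ 1`, and
`U₀ = V` is preserved by any invertible map. Conversely, if `u ∈ U₁ \ W`, choose a linear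
form `f` vanishing on `W` with `f u ≠ 0`; since `U₁ ≠ V` and `ker f + K u = V`, some
`v ∈ ker f` lies outside `U₁`. The transvection `x ↦ x + f x • v` fixes `W` pointwise but
sends `u` to `u + f u • v ∉ U₁`.
-/

open Module

namespace Submodule

variable {K V : Type*} [Field K] [AddCommGroup V] [Module K V]

theorem map_eq_self_of_le_of_forall_apply_eq {f : V →ₗ[K] V} {U W : Submodule K V}
    (hUW : U ≤ W) (hf : ∀ w ∈ W, f w = w) : U.map f = U :=
  SetLike.coe_injective <| by
    rw [map_coe]
    exact Set.EqOn.image_eq_self fun x hx => hf x (hUW hx)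

theorem exists_apply_eq_zero_notMem {U : Submodule K V} (hU : U ≠ ⊤) {f : Dual K V} {u : V}
    (hu : u ∈ U) (hfu : f u ≠ 0) : ∃ v, f v = 0 ∧ v ∉ U := by
  by_contra! hker
  refine hU (eq_top_iff'.mpr fun x => ?_)
  have hx : x - (f x / f u) • u ∈ U := hker _ (by simp [div_mul_cancel₀ _ hfu])
  simpa using U.add_mem hx (U.smul_mem (f x / f u) hu)

theorem exists_linearEquiv_forall_apply_eq_map_ne {U W : Submodule K V} (hU : U ≠ ⊤)
    (hUW : ¬U ≤ W) : ∃ e : V ≃ₗ[K] V, (∀ w ∈ W, e w = w) ∧ U.map (e : V →ₗ[K] V) ≠ U := by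
  obtain ⟨u, huU, huW⟩ := SetLike.not_le_iff_exists.mp hUW
  obtain ⟨f, hfu, hfW⟩ := W.exists_dual_map_eq_bot_of_notMem huW inferInstance
  obtain ⟨v, hfv, hvU⟩ := exists_apply_eq_zero_notMem hU huU hfu
  refine ⟨.transvection hfv, fun w hw => ?_, fun hmap => hvU ?_⟩
  · have : f w = 0 := (mem_bot K).mp (hfW ▸ mem_map_of_mem hw)
    rw [LinearEquiv.transvection.apply, this, zero_smul, add_zero]
  · have : u + f u • v ∈ U := hmap ▸ mem_map_of_mem huU
    exact (U.smul_mem_iff hfu).mp (by simpa using U.sub_mem this huU)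

end Submodule

namespace Matrix.GeneralLinearGroup

variable {n R : Type*} [Fintype n] [DecidableEq n] [CommRing R]

theorem mulVecLin_surjective (X : GL n R) : Function.Surjective (mulVecLin (X : Matrix n n R)) :=
  fun y => ⟨(X⁻¹ : GL n R) *ᵥ y, by simp [mulVec_mulVec]⟩

theorem exists_mulVecLin_eq (e : (n → R) ≃ₗ[R] (n → R)) :
    ∃ X : GL n R, mulVecLin (X : Matrix n n R) = e :=
  ⟨toLin.symm (LinearMap.GeneralLinearGroup.ofLinearEquiv e), by
    rw [← coe_toLin, MulEquiv.apply_symm_apply]; rfl⟩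

end Matrix.GeneralLinearGroup

/-- Let `H ≤ GL(V)` be the stabilizer of the flag
`V = U_0 > U_1 > ... > U_{k-1} > U_k = 0` and let `0 < W < V`. Then `U_1 ⊆ W` iff
every `X ∈ GL(V)` fixing `W` pointwise stabilizes the flag (lies in `H`). -/
theorem stmt_10 (F : Type) [Field F] (n k : ℕ) (hk : 0 < k)
    (U : Fin (k + 1) → Submodule F (Fin n → F))
    (hanti : StrictAnti U) (h0 : U 0 = ⊤)
    (W : Submodule F (Fin n → F)) :
    U ⟨1, by omega⟩ ≤ W ↔
      ∀ X : GL (Fin n) F,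
        (∀ w ∈ W, (X : Matrix (Fin n) (Fin n) F).mulVec w = w) →
        ∀ i, (U i).map (Matrix.mulVecLin (X : Matrix (Fin n) (Fin n) F)) = U i := by
  constructor
  · intro hUW X hX i
    obtain rfl | hi := eq_or_ne i 0
    · rw [h0, Submodule.map_top, LinearMap.range_eq_top]
      exact Matrix.GeneralLinearGroup.mulVecLin_surjective X
    · have hle : U i ≤ U ⟨1, by omega⟩ :=
        hanti.antitone (Fin.le_def.mpr (Nat.one_le_iff_ne_zero.mpr (Fin.val_ne_zero_iff.mpr hi)))
      exact Submodule.map_eq_self_of_le_of_forall_apply_eq (hle.trans hUW) hX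
  · intro hstab
    by_contra hUW
    have hU1 : U ⟨1, by omega⟩ ≠ ⊤ := h0 ▸ (hanti (Fin.mk_lt_mk.mpr Nat.zero_lt_one)).ne
    obtain ⟨e, he, hmap⟩ := Submodule.exists_linearEquiv_forall_apply_eq_map_ne hU1 hUW
    obtain ⟨X, hX⟩ := Matrix.GeneralLinearGroup.exists_mulVecLin_eq e
    refine hmap (hX ▸ hstab X (fun w hw => ?_) _)
    rw [← Matrix.mulVecLin_apply, hX]
    exact he w hw
end

section
/- Let V = F_q^n, let H be the stabilizer of the flag V > U_1 > ... > U_{k-1} > 0 with T = U_{k-1}, and let U' be a hyperplane of V not containing T. Let N = {X ∈ GL(V) : (X-I)V ⊆ U' and Xu = u for all u ∈ U'}. Then the sum of the subspaces (X - I)V over all X ∈ H ∩ N equals U' ∩ T. -/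
/-! Since `U'` is a hyperplane not containing `T`, we have `V = U' ⊔ T`; an `X` that fixes `U'`
pointwise and stabilizes `T` therefore moves every vector by an element of `T`, so
`(X - I)V ≤ U' ⊓ T`. Conversely, for `w ∈ U' ⊓ T` take a linear form `φ` vanishing on `U'` but
not on `T`: the transvection `X x = x + φ x • w` fixes `U'` pointwise, stabilizes every subspace
containing `w` (hence every nonzero member of the flag), and `w ∈ (X - I)V`. -/

open Module

theorem Fin.eq_last_or_le_sub_one {k : ℕ} (i : Fin (k + 1)) :
    i = Fin.last k ∨ i ≤ ⟨k - 1, by omega⟩ := by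
  rcases eq_or_ne i (Fin.last k) with rfl | hi
  · exact .inl rfl
  · have := Fin.val_lt_last hi
    exact .inr (Fin.le_iff_val_le_val.mpr (by simp only; omega))

theorem Submodule.sup_eq_top_of_finrank_eq_sub_one {K V : Type*} [DivisionRing K]
    [AddCommGroup V] [Module K V] [FiniteDimensional K V] {W T : Submodule K V}
    (hW : finrank K W = finrank K V - 1) (hT : ¬ T ≤ W) : W ⊔ T = ⊤ := by
  have hlt : finrank K W < finrank K ↥(W ⊔ T) :=
    Submodule.finrank_lt_finrank_of_lt (left_lt_sup.mpr hT)
  have hle : finrank K ↥(W ⊔ T) ≤ finrank K V := Submodule.finrank_le _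
  exact Submodule.eq_top_of_finrank_eq (by omega)

theorem LinearMap.range_sub_id_le_of_sup_eq_top {R M : Type*} [Ring R] [AddCommGroup M]
    [Module R M] {f : M →ₗ[R] M} {W T : Submodule R M} (hWT : W ⊔ T = ⊤)
    (hW : ∀ u ∈ W, f u = u) (hT : T.map f ≤ T) : range (f - id) ≤ T := by
  rintro _ ⟨v, rfl⟩
  obtain ⟨u, hu, s, hs, rfl⟩ := Submodule.mem_sup.mp (hWT ▸ Submodule.mem_top : v ∈ W ⊔ T)
  have hfs : f s ∈ T := hT ⟨s, hs, rfl⟩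
  simpa [hW u hu, add_sub_add_left_eq_sub] using T.sub_mem hfs hs

namespace LinearEquiv.transvection

variable {R V : Type*} [Ring R] [AddCommGroup V] [Module R V] {f : Dual R V} {v : V}

theorem apply_sub_self (h : f v = 0) (x : V) : transvection h x - x = f x • v :=
  add_sub_cancel_left x _

theorem map_eq_self (h : f v = 0) {P : Submodule R V} (hv : v ∈ P) :
    P.map (transvection h : V →ₗ[R] V) = P := by
  refine le_antisymm ?_ fun x hx => ⟨(transvection h).symm x, ?_, apply_symm_apply _ x⟩
  · rintro _ ⟨x, hx, rfl⟩
    exact P.add_mem hx (P.smul_mem _ hv)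
  · rw [symm_eq h (by simp [h])]
    exact P.add_mem hx (P.smul_mem _ (P.neg_mem hv))

theorem mem_range_sub_id {K : Type*} [DivisionRing K] [Module K V] {f : Dual K V} {v t : V}
    (h : f v = 0) (ht : f t ≠ 0) :
    v ∈ LinearMap.range ((transvection h : V →ₗ[K] V) - LinearMap.id) :=
  ⟨(f t)⁻¹ • t, by
    rw [LinearMap.sub_apply, LinearMap.id_apply, coe_coe, apply_sub_self h, LinearMap.map_smul,
      smul_eq_mul, inv_mul_cancel₀ ht, one_smul]⟩

end LinearEquiv.transvection

theorem Matrix.GeneralLinearGroup.exists_mulVecLin_eq_s13 {n R : Type*} [Fintype n] [DecidableEq n]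
    [CommRing R] (e : (n → R) ≃ₗ[R] n → R) :
    ∃ X : GL n R, Matrix.mulVecLin (X : Matrix n n R) = e :=
  ⟨toLin.symm ((LinearMap.GeneralLinearGroup.generalLinearEquiv R _).symm e), by
    rw [← coe_toLin, MulEquiv.apply_symm_apply]; rfl⟩

/-- Let `H` be the stabilizer of the flag `V = U_0 > ... > U_k = 0`,
`T = U_{k-1}`, and let `U'` be a hyperplane not containing `T`. With
`N = {X ∈ GL(V) : (X-I)V ⊆ U' and X fixes U' pointwise}`, the sum of the images
`(X - I)V` over all `X ∈ H ∩ N` equals `U' ∩ T`. -/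
theorem stmt_13 (F : Type) [Field F] (n k : ℕ)
    (U : Fin (k + 1) → Submodule F (Fin n → F))
    (hanti : StrictAnti U) (hlast : U (Fin.last k) = ⊥)
    (U' : Submodule F (Fin n → F)) (hU' : Module.finrank F U' = n - 1)
    (hUT : ¬ U ⟨k - 1, by omega⟩ ≤ U') :
    (⨆ X ∈ {X : GL (Fin n) F |
        (∀ i, (U i).map (Matrix.mulVecLin (X : Matrix (Fin n) (Fin n) F)) = U i) ∧
        (∀ v : Fin n → F, (X : Matrix (Fin n) (Fin n) F).mulVec v - v ∈ U') ∧
        (∀ u ∈ U', (X : Matrix (Fin n) (Fin n) F).mulVec u = u)},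
        LinearMap.range
          (Matrix.mulVecLin (X : Matrix (Fin n) (Fin n) F) - LinearMap.id)) =
      U' ⊓ U ⟨k - 1, by omega⟩ := by
  set T := U ⟨k - 1, by omega⟩
  have hU'T : U' ⊔ T = ⊤ :=
    Submodule.sup_eq_top_of_finrank_eq_sub_one (by rwa [finrank_fin_fun]) hUT
  refine le_antisymm (iSup₂_le fun X ⟨hflag, hmaps, hfix⟩ => le_inf ?_ ?_) fun w hw => ?_
  · rintro _ ⟨v, rfl⟩
    exact hmaps v
  · exact LinearMap.range_sub_id_le_of_sup_eq_top hU'T hfix (hflag _).le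
  obtain ⟨hwU', hwT⟩ := Submodule.mem_inf.mp hw
  obtain ⟨t, -, htU'⟩ := SetLike.not_le_iff_exists.mp hUT
  obtain ⟨φ, hφt, hφU'⟩ := U'.exists_dual_map_eq_bot_of_notMem htU' inferInstance
  have hφ : ∀ u ∈ U', φ u = 0 := fun u hu => LinearMap.le_ker_iff_map.mpr hφU' hu
  obtain ⟨X, hX⟩ := Matrix.GeneralLinearGroup.exists_mulVecLin_eq_s13
    (LinearEquiv.transvection (hφ w hwU'))
  refine Submodule.mem_iSup_of_mem X (Submodule.mem_iSup_of_mem ⟨fun i => ?_, fun v => ?_,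
    fun u hu => ?_⟩ (hX ▸ LinearEquiv.transvection.mem_range_sub_id _ hφt))
  · rw [hX]
    rcases i.eq_last_or_le_sub_one with rfl | hiT
    · rw [hlast, Submodule.map_bot]
    · exact LinearEquiv.transvection.map_eq_self _ (hanti.antitone hiT hwT)
  · rw [← Matrix.mulVecLin_apply, hX, LinearEquiv.coe_coe,
      LinearEquiv.transvection.apply_sub_self]
    exact U'.smul_mem _ hwU'
  · rw [← Matrix.mulVecLin_apply, hX, LinearEquiv.coe_coe, LinearEquiv.transvection.apply,
      hφ u hu, zero_smul, add_zero]
end
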